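/- Let X ∈ ℝ^{m×n} and let (U_k)_{k≥0} ⊆ ℝ^{m×r}, (V_k)_{k≥0} ⊆ ℝ^{r×n} be sequences such that for every k ≥ 1: (i) ⟨U_k − U_{k−1}, ∇_U h(U_{k−1},V_{k−1})⟩_F + (μ_k/2)·‖U_k − U_{k−1}‖_F² ≤ 0 with μ_k ≥ 2σ₁(V_{k−1}·V_{k−1}ᵀ), and (ii) ⟨V_k − V_{k−1}, ∇_V h(U_k,V_{k−1})⟩_F + (λ_k/2)·‖V_k − V_{k−1}‖_F² ≤ 0 with λ_k ≥ 2σ₁(U_kᵀ·U_k), where h(U,V) = ‖X − U·V‖_F², ∇_U h(U,V) = −2(X − U·V)·Vᵀ, and ∇_V h(U,V) = −2Uᵀ·(X − U·V). Then the objective values are monotonically non-increasing: h(U_k, V_k) ≤ h(U_{k−1}, V_{k−1}) for every k ≥ 1; moreover h(U_k,V_k) ≤ h(U_{k−1},V_{k−1}) − ((μ_k − 2σ₁(V_{k−1}V_{k−1}ᵀ))/2)‖U_k − U_{k−1}‖_F² − ((λ_k − 2σ₁(U_kᵀU_k))/2)‖V_k − V_{k−1}‖_F². -/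

import Mathlib

/-!
Each half-step of the iteration is a sufficient-decrease step. Writing the new residual as
`E - C` with `E = X - U V` and `C = (U' - U) V` (resp. `C = U (V' - V)`), one has
`‖E - C‖² = ‖E‖² - 2⟨C, E⟩ + ‖C‖²`; the cross term is controlled by the proximal inequality and
`‖C‖² ≤ σ₁(V Vᵀ) ‖U' - U‖²` (resp. `σ₁(Uᵀ U) ‖V' - V‖²`), because `σ₁(S) • 1 - S` is positive
semidefinite for symmetric `S`.
-/

open Matrix

/-- The largest eigenvalue of a real symmetric (Hermitian) matrix. -/
noncomputable def maxEigenvalue {r : ℕ} (S : Matrix (Fin r) (Fin r) ℝ) : ℝ :=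
  if h : S.IsHermitian then ⨆ i, h.eigenvalues i else 0

section

variable {ι κ : Type*} [Fintype ι] [Fintype κ]

lemma trace_transpose_mul_self_nonneg (A : Matrix ι κ ℝ) : 0 ≤ trace (Aᵀ * A) := by
  simpa using (posSemidef_conjTranspose_mul_self A).trace_nonneg

lemma Matrix.IsHermitian.eigenvalues_le_maxEigenvalue {r : ℕ} {S : Matrix (Fin r) (Fin r) ℝ}
    (hS : S.IsHermitian) (i : Fin r) : hS.eigenvalues i ≤ maxEigenvalue S := by
  rw [maxEigenvalue, dif_pos hS]
  exact le_ciSup (Set.finite_range _).bddAbove i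

lemma Matrix.IsHermitian.posSemidef_maxEigenvalue_smul_one_sub {r : ℕ}
    {S : Matrix (Fin r) (Fin r) ℝ} (hS : S.IsHermitian) :
    (maxEigenvalue S • (1 : Matrix (Fin r) (Fin r) ℝ) - S).PosSemidef := by
  open MatrixOrder in
  have hle : S ≤ algebraMap ℝ _ (maxEigenvalue S) := by
    refine le_algebraMap_of_spectrum_le (fun x hx => ?_) hS.isSelfAdjoint
    rw [hS.spectrum_real_eq_range_eigenvalues] at hx
    obtain ⟨i, rfl⟩ := hx
    exact hS.eigenvalues_le_maxEigenvalue i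
  rwa [Matrix.le_iff, Algebra.algebraMap_eq_smul_one] at hle

lemma Matrix.IsHermitian.trace_mul_mul_transpose_le {r : ℕ} {S : Matrix (Fin r) (Fin r) ℝ}
    (hS : S.IsHermitian) (D : Matrix ι (Fin r) ℝ) :
    trace (D * S * Dᵀ) ≤ maxEigenvalue S * trace (D * Dᵀ) := by
  have h := (hS.posSemidef_maxEigenvalue_smul_one_sub.mul_mul_conjTranspose_same D).trace_nonneg
  rw [conjTranspose_eq_transpose_of_trivial, Matrix.mul_sub, Matrix.sub_mul, trace_sub,
    Matrix.mul_smul, Matrix.smul_mul, trace_smul, Matrix.mul_one, smul_eq_mul] at h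
  linarith

lemma trace_transpose_mul_self_mul_le_of_right {r : ℕ} (D : Matrix ι (Fin r) ℝ)
    (W : Matrix (Fin r) κ ℝ) :
    trace ((D * W)ᵀ * (D * W)) ≤ maxEigenvalue (W * Wᵀ) * trace (Dᵀ * D) := by
  have hW : (W * Wᵀ).IsHermitian := by
    simpa using isHermitian_mul_conjTranspose_self W
  calc trace ((D * W)ᵀ * (D * W)) = trace (D * (W * Wᵀ) * Dᵀ) := by
        rw [trace_mul_comm, transpose_mul, Matrix.mul_assoc, Matrix.mul_assoc, Matrix.mul_assoc]
    _ ≤ maxEigenvalue (W * Wᵀ) * trace (D * Dᵀ) := hW.trace_mul_mul_transpose_le D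
    _ = maxEigenvalue (W * Wᵀ) * trace (Dᵀ * D) := by rw [trace_mul_comm]

lemma trace_transpose_mul_self_mul_le_of_left {r : ℕ} (U : Matrix ι (Fin r) ℝ)
    (D : Matrix (Fin r) κ ℝ) :
    trace ((U * D)ᵀ * (U * D)) ≤ maxEigenvalue (Uᵀ * U) * trace (Dᵀ * D) := by
  have hU : (Uᵀ * U).IsHermitian := by
    simpa using isHermitian_conjTranspose_mul_self U
  simpa [Matrix.mul_assoc] using hU.trace_mul_mul_transpose_le Dᵀ

lemma trace_transpose_mul_self_sub_le_of_prox {E C : Matrix ι κ ℝ} {μ L d : ℝ}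
    (hprox : -2 * trace (Cᵀ * E) + μ / 2 * d ≤ 0) (hC : trace (Cᵀ * C) ≤ L * d) :
    trace ((E - C)ᵀ * (E - C)) ≤ trace (Eᵀ * E) - (μ - 2 * L) / 2 * d := by
  have hsymm : trace (Eᵀ * C) = trace (Cᵀ * E) := by
    rw [← trace_transpose, transpose_mul, transpose_transpose]
  simp only [transpose_sub, Matrix.sub_mul, Matrix.mul_sub, trace_sub]
  linarith

lemma trace_residual_le_of_prox_left_factor {r : ℕ} (X : Matrix ι κ ℝ)
    (U U' : Matrix ι (Fin r) ℝ) (V : Matrix (Fin r) κ ℝ) {μ : ℝ}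
    (hprox : trace ((U' - U)ᵀ * ((-2 : ℝ) • ((X - U * V) * Vᵀ)))
      + μ / 2 * trace ((U' - U)ᵀ * (U' - U)) ≤ 0) :
    trace ((X - U' * V)ᵀ * (X - U' * V)) ≤ trace ((X - U * V)ᵀ * (X - U * V))
      - (μ - 2 * maxEigenvalue (V * Vᵀ)) / 2 * trace ((U' - U)ᵀ * (U' - U)) := by
  have hsplit : X - U' * V = (X - U * V) - (U' - U) * V := by
    rw [Matrix.sub_mul]; abel
  have hgrad : trace ((U' - U)ᵀ * ((-2 : ℝ) • ((X - U * V) * Vᵀ)))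
      = -2 * trace (((U' - U) * V)ᵀ * (X - U * V)) := by
    rw [Matrix.mul_smul, trace_smul, smul_eq_mul, transpose_mul, trace_mul_cycle, trace_mul_comm]
  rw [hsplit]
  exact trace_transpose_mul_self_sub_le_of_prox (hgrad ▸ hprox)
    (trace_transpose_mul_self_mul_le_of_right _ _)

lemma trace_residual_le_of_prox_right_factor {r : ℕ} (X : Matrix ι κ ℝ)
    (U : Matrix ι (Fin r) ℝ) (V V' : Matrix (Fin r) κ ℝ) {lam : ℝ}
    (hprox : trace ((V' - V)ᵀ * ((-2 : ℝ) • (Uᵀ * (X - U * V))))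
      + lam / 2 * trace ((V' - V)ᵀ * (V' - V)) ≤ 0) :
    trace ((X - U * V')ᵀ * (X - U * V')) ≤ trace ((X - U * V)ᵀ * (X - U * V))
      - (lam - 2 * maxEigenvalue (Uᵀ * U)) / 2 * trace ((V' - V)ᵀ * (V' - V)) := by
  have hsplit : X - U * V' = (X - U * V) - U * (V' - V) := by
    rw [Matrix.mul_sub]; abel
  have hgrad : trace ((V' - V)ᵀ * ((-2 : ℝ) • (Uᵀ * (X - U * V))))
      = -2 * trace ((U * (V' - V))ᵀ * (X - U * V)) := by
    rw [Matrix.mul_smul, trace_smul, smul_eq_mul, transpose_mul, Matrix.mul_assoc]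
  rw [hsplit]
  exact trace_transpose_mul_self_sub_le_of_prox (hgrad ▸ hprox)
    (trace_transpose_mul_self_mul_le_of_left _ _)

end

/-- The paper's iterate at time `k` is the one indexed `k+1` here; `⟨A, B⟩_F = trace (Aᵀ * B)`
and `‖A‖_F² = trace (Aᵀ * A)`. -/
theorem stmt_8 {m n r : ℕ} (X : Matrix (Fin m) (Fin n) ℝ)
    (U : ℕ → Matrix (Fin m) (Fin r) ℝ) (V : ℕ → Matrix (Fin r) (Fin n) ℝ)
    (μ lam : ℕ → ℝ)
    (hUprox : ∀ k : ℕ,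
      Matrix.trace ((U (k+1) - U k)ᵀ * ((-2 : ℝ) • ((X - U k * V k) * (V k)ᵀ)))
        + μ (k+1) / 2 * Matrix.trace ((U (k+1) - U k)ᵀ * (U (k+1) - U k)) ≤ 0)
    (hμ : ∀ k : ℕ, 2 * maxEigenvalue (V k * (V k)ᵀ) ≤ μ (k+1))
    (hVprox : ∀ k : ℕ,
      Matrix.trace ((V (k+1) - V k)ᵀ * ((-2 : ℝ) • ((U (k+1))ᵀ * (X - U (k+1) * V k))))
        + lam (k+1) / 2 * Matrix.trace ((V (k+1) - V k)ᵀ * (V (k+1) - V k)) ≤ 0)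
    (hlam : ∀ k : ℕ, 2 * maxEigenvalue ((U (k+1))ᵀ * U (k+1)) ≤ lam (k+1)) :
    ∀ k : ℕ,
      Matrix.trace ((X - U (k+1) * V (k+1))ᵀ * (X - U (k+1) * V (k+1))) ≤
        Matrix.trace ((X - U k * V k)ᵀ * (X - U k * V k)) ∧
      Matrix.trace ((X - U (k+1) * V (k+1))ᵀ * (X - U (k+1) * V (k+1))) ≤
        Matrix.trace ((X - U k * V k)ᵀ * (X - U k * V k))
          - (μ (k+1) - 2 * maxEigenvalue (V k * (V k)ᵀ)) / 2 *
              Matrix.trace ((U (k+1) - U k)ᵀ * (U (k+1) - U k))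
          - (lam (k+1) - 2 * maxEigenvalue ((U (k+1))ᵀ * U (k+1))) / 2 *
              Matrix.trace ((V (k+1) - V k)ᵀ * (V (k+1) - V k)) := by
  intro k
  have hUstep := trace_residual_le_of_prox_left_factor X (U k) (U (k+1)) (V k) (hUprox k)
  have hVstep := trace_residual_le_of_prox_right_factor X (U (k+1)) (V k) (V (k+1)) (hVprox k)
  have hUgain : 0 ≤ (μ (k+1) - 2 * maxEigenvalue (V k * (V k)ᵀ)) / 2 *
      Matrix.trace ((U (k+1) - U k)ᵀ * (U (k+1) - U k)) :=
    mul_nonneg (by linarith [hμ k]) (trace_transpose_mul_self_nonneg _)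
  have hVgain : 0 ≤ (lam (k+1) - 2 * maxEigenvalue ((U (k+1))ᵀ * U (k+1))) / 2 *
      Matrix.trace ((V (k+1) - V k)ᵀ * (V (k+1) - V k)) :=
    mul_nonneg (by linarith [hlam k]) (trace_transpose_mul_self_nonneg _)
  constructor <;> linarith
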